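/- The error-sum function E of Pierce expansions is continuous at every point of [0,1] that is not a rational number in (0,1); in particular, E is continuous Lebesgue-almost everywhere on [0,1]. -/

import Mathlib

open scoped BigOperators

/-- Reciprocal of an extended natural number as a real, with `1/∞ = 0`. -/
noncomputable def pinv (a : ℕ∞) : ℝ := ((a.toNat : ℕ) : ℝ)⁻¹

/-- First Pierce digit: `⌊1/x⌋` for `x ≠ 0`, and `∞` for `x = 0`. -/
noncomputable def pd1 (x : ℝ) : ℕ∞ := if x = 0 then ⊤ else (⌊x⁻¹⌋₊ : ℕ∞)

/-- Pierce map `T(x) = 1 - ⌊1/x⌋ x` for `x ≠ 0`, `T(0) = 0`. -/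
noncomputable def pT (x : ℝ) : ℝ := if x = 0 then 0 else 1 - (⌊x⁻¹⌋₊ : ℝ) * x

/-- `n`-th Pierce digit `d_n(x) = d_1(T^{n-1} x)` (for `n ≥ 1`). -/
noncomputable def pdig (n : ℕ) (x : ℝ) : ℕ∞ := pd1 (pT^[n-1] x)

/-- `1/(d_1(x) ⋯ d_n(x))`, with the convention that a factor `∞` makes it `0`. -/
noncomputable def pprodR (n : ℕ) (x : ℝ) : ℝ := ∏ k ∈ Finset.Icc 1 n, pinv (pdig k x)

/-- `n`-th partial sum `s_n(x)` of the Pierce expansion of `x`. -/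
noncomputable def psum (n : ℕ) (x : ℝ) : ℝ :=
  ∑ k ∈ Finset.Icc 1 n, (-1 : ℝ) ^ (k + 1) * pprodR k x

/-- The error-sum function of Pierce expansions `E(x) = Σ_{n≥1} (x - s_n(x))`. -/
noncomputable def pE (x : ℝ) : ℝ := ∑' n : ℕ, (x - psum (n + 1) x)

/-- A Pierce sequence (0-indexed: `σ k` is the paper's `σ_{k+1}`): terms are positive, strictly
increasing while finite, and once a term is `∞` all later terms are `∞`. -/
def IsPierce (σ : ℕ → ℕ∞) : Prop :=
  1 ≤ σ 0 ∧ ∀ n, σ n < σ (n + 1) ∨ (σ n = ⊤ ∧ σ (n + 1) = ⊤)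

/-- `n`-th partial sum `φ_n(σ)`. -/
noncomputable def pphiN (n : ℕ) (σ : ℕ → ℕ∞) : ℝ :=
  ∑ k ∈ Finset.range n, (-1 : ℝ) ^ k * ∏ i ∈ Finset.range (k + 1), pinv (σ i)

/-- `φ(σ) = Σ_{k≥1} (-1)^{k+1}/(σ_1 ⋯ σ_k)`. -/
noncomputable def pphi (σ : ℕ → ℕ∞) : ℝ :=
  ∑' k : ℕ, (-1 : ℝ) ^ k * ∏ i ∈ Finset.range (k + 1), pinv (σ i)

/-- The error-sum function of Pierce sequences `E*(σ) = Σ_{n≥1} (φ(σ) - φ_n(σ))`. -/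
noncomputable def pEstar (σ : ℕ → ℕ∞) : ℝ := ∑' n : ℕ, (pphi σ - pphiN (n + 1) σ)

/-- The series formula `Σ_{n≥1} (-1)^n n/(σ_1 ⋯ σ_{n+1})` for the error-sum of a sequence. -/
noncomputable def pEstarSeries (σ : ℕ → ℕ∞) : ℝ :=
  ∑' n : ℕ, (-1 : ℝ) ^ (n + 1) * (n + 1) * ∏ i ∈ Finset.range (n + 2), pinv (σ i)

/-- The metric `ρ(x,y) = 1/x + 1/y` for `x ≠ y` (with `1/∞ = 0`), `ρ(x,x) = 0`. -/
noncomputable def prho (x y : ℕ∞) : ℝ := if x = y then 0 else pinv x + pinv y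

/-- The metric `ρ^ℕ(σ,τ) = Σ_{n≥1} ρ(σ_n, τ_n)/n!` on sequences. -/
noncomputable def prhoN (σ τ : ℕ → ℕ∞) : ℝ :=
  ∑' n : ℕ, prho (σ n) (τ n) / ((n + 1).factorial : ℝ)

/-!
By induction on `n`, `x - s_n(x) = (-1)^n T^n(x) / (d_1(x) ⋯ d_n(x))`. The digits increase
strictly, so `d_k(x) ≥ k` and the `n`-th term of `E` is bounded by `1/(n+1)!` on `[0, 1]`: `E` is
the uniform limit of its partial sums, and it suffices that each term `y - s_n(y)` is continuous
at `x`. At an irrational `x` every iterate `T^k` is affine near `x` with an irrational value, so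
the digits, hence `s_n`, are locally constant. At `x = 0` and `x = 1` the term is bounded by
`T(y)`, which tends to `T(x) = 0`. The rationals of `(0, 1)` form a null set.
-/

open Filter Set Topology
open scoped Nat

lemma TendstoUniformlyOn.continuousWithinAt {α β ι : Type*} [TopologicalSpace α] [UniformSpace β]
    {F : ι → α → β} {f : α → β} {p : Filter ι} {s : Set α} {x : α}
    (h : TendstoUniformlyOn F f p s) (hx : x ∈ s) (hc : ∃ᶠ i in p, ContinuousWithinAt (F i) s x) :
    ContinuousWithinAt f s x :=
  continuousWithinAt_of_locally_uniform_approx_of_continuousWithinAt hx fun u hu =>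
    let ⟨i, hFc, hF⟩ := (hc.and_eventually (h u hu)).exists
    ⟨s, self_mem_nhdsWithin, F i, hFc, hF⟩

lemma continuousWithinAt_of_norm_le {α E : Type*} [TopologicalSpace α] [NormedAddCommGroup E]
    {f : α → E} {g : α → ℝ} {s : Set α} {x : α} (hx : x ∈ s) (hfg : ∀ y ∈ s, ‖f y‖ ≤ g y)
    (hg : ContinuousWithinAt g s x) (hgx : g x = 0) : ContinuousWithinAt f s x := by
  have hfx : f x = 0 := norm_le_zero_iff.mp (hgx ▸ hfg x hx)
  rw [ContinuousWithinAt, hfx]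
  exact squeeze_zero_norm' (eventually_nhdsWithin_of_forall hfg) (hgx ▸ hg)

lemma Nat.eventually_floor_eq {R : Type*} [Ring R] [LinearOrder R] [IsStrictOrderedRing R]
    [FloorSemiring R] [TopologicalSpace R] [OrderTopology R] {t : R} (ht : 0 ≤ t)
    (h : ∀ n : ℕ, t ≠ n) : ∀ᶠ s in 𝓝 t, ⌊s⌋₊ = ⌊t⌋₊ := by
  have hlt : (⌊t⌋₊ : R) < t := (Nat.floor_le ht).lt_of_ne (h _).symm
  filter_upwards [Ioo_mem_nhds hlt (Nat.lt_floor_add_one t)] with s hs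
  exact Nat.floor_eq_on_Ico _ s ⟨hs.1.le, hs.2⟩

section PierceMap

variable {x y : ℝ}

lemma pinv_nonneg (a : ℕ∞) : 0 ≤ pinv a := by
  unfold pinv
  positivity

lemma pinv_le_one (a : ℕ∞) : pinv a ≤ 1 :=
  Nat.cast_inv_le_one _

lemma pinv_pd1 (y : ℝ) : pinv (pd1 y) = (⌊y⁻¹⌋₊ : ℝ)⁻¹ := by
  unfold pinv pd1
  split_ifs with h <;> simp [h]

lemma pT_zero : pT 0 = 0 := by
  simp [pT]

lemma pT_of_ne_zero (hy : y ≠ 0) : pT y = 1 - ⌊y⁻¹⌋₊ * y :=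
  if_neg hy

lemma floor_inv_pos (h0 : 0 < y) (h1 : y ≤ 1) : 0 < ⌊y⁻¹⌋₊ :=
  Nat.floor_pos.mpr ((one_le_inv₀ h0).mpr h1)

lemma floor_inv_mul_le_one (hy : 0 ≤ y) : ⌊y⁻¹⌋₊ * y ≤ 1 := by
  rcases hy.eq_or_lt with rfl | hy
  · simp
  · calc ⌊y⁻¹⌋₊ * y ≤ y⁻¹ * y := by gcongr; exact Nat.floor_le (by positivity)
      _ = 1 := inv_mul_cancel₀ hy.ne'

lemma one_lt_floor_inv_add_one_mul (hy : 0 < y) : 1 < (⌊y⁻¹⌋₊ + 1) * y :=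
  calc 1 = y⁻¹ * y := (inv_mul_cancel₀ hy.ne').symm
    _ < (⌊y⁻¹⌋₊ + 1) * y := by gcongr; exact Nat.lt_floor_add_one _

lemma pT_nonneg (hy : 0 ≤ y) : 0 ≤ pT y := by
  rcases hy.eq_or_lt with rfl | hy
  · simp [pT_zero]
  · rw [pT_of_ne_zero hy.ne']
    linarith [floor_inv_mul_le_one hy.le]

lemma pT_le_self (hy : 0 ≤ y) : pT y ≤ y := by
  rcases hy.eq_or_lt with rfl | hy
  · simp [pT_zero]
  · rw [pT_of_ne_zero hy.ne']
    linarith [one_lt_floor_inv_add_one_mul hy]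

lemma pT_iterate_nonneg (hx : 0 ≤ x) (n : ℕ) : 0 ≤ pT^[n] x := by
  induction n with
  | zero => exact hx
  | succ n ih => rw [Function.iterate_succ_apply']; exact pT_nonneg ih

lemma pT_iterate_le_self (hx : 0 ≤ x) (n : ℕ) : pT^[n] x ≤ x := by
  induction n with
  | zero => rfl
  | succ n ih =>
    rw [Function.iterate_succ_apply']
    exact (pT_le_self (pT_iterate_nonneg hx n)).trans ih

lemma pT_iterate_mem_Icc (hx : x ∈ Icc (0 : ℝ) 1) (n : ℕ) : pT^[n] x ∈ Icc (0 : ℝ) 1 :=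
  ⟨pT_iterate_nonneg hx.1 n, (pT_iterate_le_self hx.1 n).trans hx.2⟩

lemma pT_iterate_succ_le_pT (hx : 0 ≤ x) (n : ℕ) : pT^[n + 1] x ≤ pT x :=
  pT_iterate_le_self (pT_nonneg hx) n

lemma pT_iterate_ne_zero_of_le {m n : ℕ} (hmn : m ≤ n) (h : pT^[n] x ≠ 0) : pT^[m] x ≠ 0 := by
  obtain ⟨k, rfl⟩ := Nat.exists_eq_add_of_le hmn
  intro h0
  rw [add_comm, Function.iterate_add_apply, h0, Function.iterate_fixed pT_zero] at h
  exact h rfl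

-- The Pierce digits increase strictly: `d_{n+2}(x) > d_{n+1}(x)` as long as `T^{n+1} x ≠ 0`.
lemma floor_inv_add_one_le_floor_inv_pT (hy : 0 < y) (hT : pT y ≠ 0) :
    ⌊y⁻¹⌋₊ + 1 ≤ ⌊(pT y)⁻¹⌋₊ := by
  set d := ⌊y⁻¹⌋₊
  have hT0 : 0 < pT y := (pT_nonneg hy.le).lt_of_ne' hT
  have hTd : pT y * (d + 1) ≤ 1 := by
    rw [pT_of_ne_zero hy.ne']
    nlinarith [one_lt_floor_inv_add_one_mul hy, (Nat.cast_nonneg d : (0 : ℝ) ≤ d)]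
  apply Nat.le_floor
  rw [Nat.cast_add_one, ← one_div, le_div_iff₀ hT0]
  linarith

lemma add_one_le_floor_inv_iterate (hx : x ∈ Icc (0 : ℝ) 1) {n : ℕ} (h : pT^[n] x ≠ 0) :
    n + 1 ≤ ⌊(pT^[n] x)⁻¹⌋₊ := by
  induction n with
  | zero => exact floor_inv_pos (hx.1.lt_of_ne' h) hx.2
  | succ n ih =>
    have hn : pT^[n] x ≠ 0 := pT_iterate_ne_zero_of_le n.le_succ h
    rw [Function.iterate_succ_apply'] at h ⊢
    exact (Nat.add_le_add_right (ih hn) 1).trans <|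
      floor_inv_add_one_le_floor_inv_pT ((pT_iterate_nonneg hx.1 n).lt_of_ne' hn) h

lemma pinv_pd1_mul_one_sub_pT (hy : y ∈ Icc (0 : ℝ) 1) : pinv (pd1 y) * (1 - pT y) = y := by
  rcases hy.1.eq_or_lt with rfl | hy0
  · simp [pd1, pinv]
  · have hd : (⌊y⁻¹⌋₊ : ℝ) ≠ 0 := Nat.cast_ne_zero.mpr (floor_inv_pos hy0 hy.2).ne'
    rw [pinv_pd1, pT_of_ne_zero hy0.ne', sub_sub_cancel, ← mul_assoc, inv_mul_cancel₀ hd, one_mul]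

end PierceMap

section PartialSums

variable {x : ℝ}

lemma pprodR_zero (x : ℝ) : pprodR 0 x = 1 := by
  simp [pprodR]

lemma pprodR_succ (n : ℕ) (x : ℝ) : pprodR (n + 1) x = pprodR n x * pinv (pd1 (pT^[n] x)) :=
  Finset.prod_Icc_succ_top n.succ_pos' _

lemma psum_zero (x : ℝ) : psum 0 x = 0 := by
  simp [psum]

lemma psum_succ (n : ℕ) (x : ℝ) :
    psum (n + 1) x = psum n x + (-1) ^ (n + 2) * pprodR (n + 1) x :=
  Finset.sum_Icc_succ_top n.succ_pos' _

lemma pprodR_nonneg (n : ℕ) (x : ℝ) : 0 ≤ pprodR n x :=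
  Finset.prod_nonneg fun _ _ => pinv_nonneg _

lemma pprodR_le_one (n : ℕ) (x : ℝ) : pprodR n x ≤ 1 :=
  Finset.prod_le_one (fun _ _ => pinv_nonneg _) fun _ _ => pinv_le_one _

lemma pprodR_le_inv_factorial (hx : x ∈ Icc (0 : ℝ) 1) {n : ℕ} (h : pT^[n] x ≠ 0) :
    pprodR n x ≤ (n ! : ℝ)⁻¹ := by
  induction n with
  | zero => simp [pprodR_zero]
  | succ n ih =>
    have hn : pT^[n] x ≠ 0 := pT_iterate_ne_zero_of_le n.le_succ h
    have hd : ((n + 1 : ℕ) : ℝ) ≤ ⌊(pT^[n] x)⁻¹⌋₊ := by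
      exact_mod_cast add_one_le_floor_inv_iterate hx hn
    rw [pprodR_succ, pinv_pd1, Nat.factorial_succ, Nat.cast_mul, mul_inv, mul_comm]
    gcongr
    · exact pprodR_nonneg n x
    · exact ih hn

lemma sub_psum_eq (hx : x ∈ Icc (0 : ℝ) 1) (n : ℕ) :
    x - psum n x = (-1) ^ n * (pT^[n] x * pprodR n x) := by
  induction n with
  | zero => simp [psum_zero, pprodR_zero]
  | succ n ih =>
    have hstep := pinv_pd1_mul_one_sub_pT (pT_iterate_mem_Icc hx n)
    rw [psum_succ, pprodR_succ, Function.iterate_succ_apply']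
    linear_combination ih - (-1) ^ n * pprodR n x * hstep

lemma abs_sub_psum (hx : x ∈ Icc (0 : ℝ) 1) (n : ℕ) :
    |x - psum n x| = pT^[n] x * pprodR n x := by
  rw [sub_psum_eq hx, abs_mul, abs_pow, abs_neg, abs_one, one_pow, one_mul,
    abs_of_nonneg (mul_nonneg (pT_iterate_nonneg hx.1 n) (pprodR_nonneg n x))]

lemma abs_sub_psum_le_inv_factorial (hx : x ∈ Icc (0 : ℝ) 1) (n : ℕ) :
    |x - psum n x| ≤ (n ! : ℝ)⁻¹ := by
  rw [abs_sub_psum hx]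
  rcases eq_or_ne (pT^[n] x) 0 with h | h
  · rw [h, zero_mul]
    positivity
  · calc pT^[n] x * pprodR n x ≤ 1 * (n ! : ℝ)⁻¹ :=
          mul_le_mul (pT_iterate_mem_Icc hx n).2 (pprodR_le_inv_factorial hx h)
            (pprodR_nonneg n x) zero_le_one
      _ = (n ! : ℝ)⁻¹ := one_mul _

lemma abs_sub_psum_succ_le_pT (hx : x ∈ Icc (0 : ℝ) 1) (n : ℕ) :
    |x - psum (n + 1) x| ≤ pT x := by
  rw [abs_sub_psum hx]
  calc pT^[n + 1] x * pprodR (n + 1) x ≤ pT^[n + 1] x * 1 :=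
        mul_le_mul_of_nonneg_left (pprodR_le_one _ x) (pT_iterate_nonneg hx.1 _)
    _ ≤ pT x := (mul_one _).trans_le (pT_iterate_succ_le_pT hx.1 n)

lemma tendstoUniformlyOn_pE :
    TendstoUniformlyOn (fun N y => ∑ n ∈ Finset.range N, (y - psum (n + 1) y)) pE atTop
      (Icc (0 : ℝ) 1) := by
  have hsum : Summable fun n : ℕ => ((n + 1)! : ℝ)⁻¹ := by
    simpa using (summable_nat_add_iff 1).mpr (Real.summable_pow_div_factorial 1)
  exact tendstoUniformlyOn_tsum_nat hsum fun n y hy => abs_sub_psum_le_inv_factorial hy (n + 1)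

end PartialSums

section Continuity

variable {x y : ℝ}

lemma pT_one : pT 1 = 0 := by
  norm_num [pT]

lemma pT_eq_one_sub (h : 1 / 2 < y) (h1 : y ≤ 1) : pT y = 1 - y := by
  have hy0 : 0 < y := by linarith
  have hfloor : ⌊y⁻¹⌋₊ = 1 := by
    rw [Nat.floor_eq_iff (by positivity), Nat.cast_one, one_le_inv₀ hy0,
      inv_lt_comm₀ hy0 (by norm_num)]
    constructor <;> linarith
  rw [pT_of_ne_zero hy0.ne', hfloor, Nat.cast_one, one_mul]

lemma continuousWithinAt_pT_zero : ContinuousWithinAt pT (Icc 0 1) 0 := by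
  rw [ContinuousWithinAt, pT_zero]
  exact tendsto_of_tendsto_of_tendsto_of_le_of_le' tendsto_const_nhds continuousWithinAt_id
    (eventually_nhdsWithin_of_forall fun y hy => pT_nonneg hy.1)
    (eventually_nhdsWithin_of_forall fun y hy => pT_le_self hy.1)

lemma continuousWithinAt_pT_one : ContinuousWithinAt pT (Icc 0 1) 1 := by
  have h : ContinuousWithinAt (fun y : ℝ => 1 - y) (Icc 0 1) 1 := by fun_prop
  refine h.congr_of_eventuallyEq ?_ (by rw [pT_one, sub_self])
  filter_upwards [self_mem_nhdsWithin,
    nhdsWithin_le_nhds (Ioi_mem_nhds (by norm_num : (1 / 2 : ℝ) < 1))] with y hy hy2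
  exact pT_eq_one_sub hy2 hy.2

lemma Irrational.eventually_floor_inv_eq (hx : Irrational x) (hx0 : 0 < x) :
    ∀ᶠ y in 𝓝 x, ⌊y⁻¹⌋₊ = ⌊x⁻¹⌋₊ :=
  (continuousAt_inv₀ hx0.ne').eventually
    (Nat.eventually_floor_eq (inv_nonneg.2 hx0.le) hx.inv.ne_nat)

lemma Irrational.eventually_pd1_eq (hx : Irrational x) (hx0 : 0 < x) :
    ∀ᶠ y in 𝓝 x, pd1 y = pd1 x := by
  filter_upwards [hx.eventually_floor_inv_eq hx0, eventually_ne_nhds hx0.ne'] with y hy hy0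
  rw [pd1, pd1, if_neg hy0, if_neg hx0.ne', hy]

lemma Irrational.continuousAt_pT (hx : Irrational x) (hx0 : 0 < x) : ContinuousAt pT x := by
  have h : ContinuousAt (fun y : ℝ => 1 - ⌊x⁻¹⌋₊ * y) x := by fun_prop
  refine h.congr ?_
  filter_upwards [hx.eventually_floor_inv_eq hx0, eventually_ne_nhds hx0.ne'] with y hy hy0
  rw [pT_of_ne_zero hy0, hy]

lemma irrational_pT (hx : Irrational x) (hx0 : 0 < x) (hx1 : x ≤ 1) : Irrational (pT x) := by
  rw [pT_of_ne_zero hx0.ne']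
  simpa using (hx.natCast_mul (floor_inv_pos hx0 hx1).ne').natCast_sub 1

lemma irrational_pT_iterate (hx : Irrational x) (hx01 : x ∈ Icc (0 : ℝ) 1) (n : ℕ) :
    Irrational (pT^[n] x) := by
  induction n with
  | zero => exact hx
  | succ n ih =>
    have hmem := pT_iterate_mem_Icc hx01 n
    rw [Function.iterate_succ_apply']
    exact irrational_pT ih (hmem.1.lt_of_ne' ih.ne_zero) hmem.2

lemma Irrational.continuousAt_pT_iterate (hx : Irrational x) (hx01 : x ∈ Icc (0 : ℝ) 1)
    (n : ℕ) : ContinuousAt pT^[n] x := by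
  induction n with
  | zero => exact continuousAt_id
  | succ n ih =>
    have hirr := irrational_pT_iterate hx hx01 n
    rw [Function.iterate_succ']
    exact (hirr.continuousAt_pT ((pT_iterate_mem_Icc hx01 n).1.lt_of_ne' hirr.ne_zero)).comp ih

lemma Irrational.eventually_pdig_eq (hx : Irrational x) (hx01 : x ∈ Icc (0 : ℝ) 1) (k : ℕ) :
    ∀ᶠ y in 𝓝 x, pdig k y = pdig k x := by
  have hirr := irrational_pT_iterate hx hx01 (k - 1)
  exact (hx.continuousAt_pT_iterate hx01 (k - 1)).eventually
    (hirr.eventually_pd1_eq ((pT_iterate_mem_Icc hx01 _).1.lt_of_ne' hirr.ne_zero))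

lemma Irrational.eventually_psum_eq (hx : Irrational x) (hx01 : x ∈ Icc (0 : ℝ) 1) (n : ℕ) :
    ∀ᶠ y in 𝓝 x, psum n y = psum n x := by
  filter_upwards [(eventually_all_finset (Finset.Icc 1 n)).mpr
    fun k _ => hx.eventually_pdig_eq hx01 k] with y hy
  refine Finset.sum_congr rfl fun k hk => ?_
  rw [pprodR, pprodR, Finset.prod_congr rfl fun i hi =>
    congrArg pinv (hy i (Finset.Icc_subset_Icc_right (Finset.mem_Icc.mp hk).2 hi))]

lemma Irrational.continuousAt_sub_psum (hx : Irrational x) (hx01 : x ∈ Icc (0 : ℝ) 1)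
    (n : ℕ) : ContinuousAt (fun y => y - psum n y) x :=
  continuousAt_id.sub <| continuousAt_const.congr <| by
    filter_upwards [hx.eventually_psum_eq hx01 n] with y hy using hy.symm

end Continuity

lemma continuousWithinAt_pE {x : ℝ} (hx : x ∈ Icc (0 : ℝ) 1)
    (h : x = 0 ∨ x = 1 ∨ Irrational x) : ContinuousWithinAt pE (Icc 0 1) x := by
  refine tendstoUniformlyOn_pE.continuousWithinAt hx <| Frequently.of_forall fun N =>
    tendsto_finsetSum _ fun n _ => ?_
  rcases h with rfl | rfl | hirr
  · exact continuousWithinAt_of_norm_le hx (fun y hy => abs_sub_psum_succ_le_pT hy n)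
      continuousWithinAt_pT_zero pT_zero
  · exact continuousWithinAt_of_norm_le hx (fun y hy => abs_sub_psum_succ_le_pT hy n)
      continuousWithinAt_pT_one pT_one
  · exact (hirr.continuousAt_sub_psum hx (n + 1)).continuousWithinAt

theorem stmt14 :
    (∀ x ∈ Set.Icc (0 : ℝ) 1,
      x ∉ {y : ℝ | (∃ q : ℚ, (q : ℝ) = y) ∧ y ∈ Set.Ioo (0 : ℝ) 1} →
      ContinuousWithinAt pE (Set.Icc (0 : ℝ) 1) x) ∧
    (∀ᵐ x ∂(MeasureTheory.volume.restrict (Set.Icc (0 : ℝ) 1)),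
      ContinuousWithinAt pE (Set.Icc (0 : ℝ) 1) x) := by
  have hcont : ∀ x ∈ Icc (0 : ℝ) 1,
      x ∉ {y : ℝ | (∃ q : ℚ, (q : ℝ) = y) ∧ y ∈ Ioo (0 : ℝ) 1} →
      ContinuousWithinAt pE (Icc (0 : ℝ) 1) x := by
    intro x hx hxQ
    refine continuousWithinAt_pE hx ?_
    by_contra! h
    obtain ⟨h0, h1, hrat⟩ := h
    exact hxQ ⟨not_not.mp hrat, hx.1.lt_of_ne' h0, hx.2.lt_of_ne h1⟩
  have hnull : MeasureTheory.volume {y : ℝ | (∃ q : ℚ, (q : ℝ) = y) ∧ y ∈ Ioo (0 : ℝ) 1} = 0 :=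
    ((countable_range ((↑) : ℚ → ℝ)).mono fun y hy => hy.1).measure_zero _
  refine ⟨hcont, ?_⟩
  filter_upwards [MeasureTheory.ae_restrict_mem measurableSet_Icc,
    MeasureTheory.ae_restrict_of_ae (MeasureTheory.measure_eq_zero_iff_ae_notMem.mp hnull)]
    with x hx hxQ using hcont x hx hxQ
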